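/- arXiv:math/0310189 — 2 statements merged into one kernel-verified Lean document; each statement's English description precedes it below -/
import Mathlib

section
/- Let H be a weak Frobenius algebra over ℂ with Δ(1_H) = ∑_j a_j ⊗ b_j and Euler class e = ∑_j a_j b_j. If e is nilpotent, then the map u ↦ u − e·u^{-1} is a surjection from the group of invertible elements of H onto itself. -/
open TensorProduct

/-- Auxiliary: if `c` is nilpotent in a commutative ring, the equation
`y + y² = c` has a nilpotent solution (Hensel-style iteration). -/
lemma stmt_9_aux {H : Type*} [CommRing H] {c : H} (hc : IsNilpotent c) :
    ∃ y : H, IsNilpotent y ∧ y + y ^ 2 = c := by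
  obtain ⟨n, hn⟩ := hc
  set I : Ideal H := Ideal.span {c} with hI
  -- the iteration
  let f : ℕ → H := fun k => Nat.rec 0 (fun _ x => c - x ^ 2) k
  have hf0 : f 0 = 0 := rfl
  have hfs : ∀ k, f (k + 1) = c - (f k) ^ 2 := fun k => rfl
  have hcI : c ∈ I := Ideal.subset_span rfl
  have hmem : ∀ k, f k ∈ I := by
    intro k
    induction k with
    | zero => simp [hf0]
    | succ k ih =>
        rw [hfs]
        exact sub_mem hcI (by simpa [sq] using Ideal.mul_mem_left I _ ih)
  have hdiff : ∀ k, f (k + 1) - f k ∈ I ^ (k + 1) := by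
    intro k
    induction k with
    | zero =>
        rw [show f (0 + 1) = c - f 0 ^ 2 from hfs 0, hf0]
        simpa using hcI
    | succ k ih =>
        have : f (k + 2) - f (k + 1) = (f k - f (k + 1)) * (f k + f (k + 1)) := by
          rw [hfs (k+1), hfs k]; ring
        rw [this, pow_succ]
        exact Ideal.mul_mem_mul (by simpa using neg_mem ih) (add_mem (hmem k) (hmem (k+1)))
  have hzero : I ^ (n + 1) = ⊥ := by
    rw [hI, Ideal.span_singleton_pow, pow_succ, hn, zero_mul,
      Ideal.span_singleton_eq_bot.mpr rfl]
  have hfix : f (n + 1) = f n := by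
    have := hdiff n
    rw [hzero, Ideal.mem_bot, sub_eq_zero] at this
    exact this
  refine ⟨f n, ?_, ?_⟩
  · obtain ⟨r, hr⟩ := Ideal.mem_span_singleton'.mp (hmem n)
    exact ⟨n, by rw [← hr, mul_pow, hn, mul_zero]⟩
  · rw [hfs] at hfix
    linear_combination -hfix

/-- Let `H` be a weak Frobenius algebra over `ℂ`, i.e. a unital
commutative ℂ-algebra equipped with an `H`-bimodule map `Δ : H → H ⊗ H`
(so `Δ(a·h) = a·Δ(h)`, the bimodule property, where `H ⊗ H` is an `H`-module
through either factor), with Euler class `e = m(Δ(1))`.  If `e` is nilpotent,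
then the map `u ↦ u − e·u⁻¹` is a surjection from the group of invertible
elements of `H` onto itself. -/
theorem stmt_9 (H : Type*) [CommRing H] [Algebra ℂ H]
    (Δ : H →ₗ[ℂ] H ⊗[ℂ] H)
    -- bimodule property: `Δ(ahb) = a Δ(h) b`, via multiplication in either factor
    (hΔl : ∀ a h : H, Δ (a * h) = (Algebra.TensorProduct.includeLeft (R := ℂ) (S := ℂ) a) * Δ h)
    (hΔr : ∀ a h : H, Δ (h * a) = Δ h * (Algebra.TensorProduct.includeRight (R := ℂ) a))
    -- the Euler class
    (e : H) (he : e = LinearMap.mul' ℂ H (Δ 1))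
    (hnil : IsNilpotent e) :
    -- `u ↦ u − e u⁻¹` maps invertibles to invertibles, surjectively
    (∀ u : Hˣ, IsUnit ((u : H) - e * (↑u⁻¹ : H))) ∧
    (∀ K : Hˣ, ∃ u : Hˣ, (u : H) - e * (↑u⁻¹ : H) = (K : H)) := by
  constructor
  · intro u
    have h1 : (u : H) - e * (↑u⁻¹ : H) = (u : H) * (1 - e * (↑u⁻¹ : H) ^ 2) := by
      have := u.mul_inv
      push_cast at this ⊢
      ring_nf
      rw [sq]
      calc (u:H) - e * ↑u⁻¹ = (u:H) - e * ↑u⁻¹ * ((u:H) * ↑u⁻¹) := by rw [this, mul_one]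
        _ = (u:H) - (u:H) * e * (↑u⁻¹ * ↑u⁻¹) := by ring
    rw [h1]
    refine (u.isUnit).mul ?_
    have : IsNilpotent (e * (↑u⁻¹ : H) ^ 2) := by
      obtain ⟨n, hn⟩ := hnil
      exact ⟨n, by rw [mul_pow, hn, zero_mul]⟩
    exact this.isUnit_one_sub
  · intro K
    have hc : IsNilpotent (e * ((↑K⁻¹ : H)) ^ 2) := by
      obtain ⟨n, hn⟩ := hnil
      exact ⟨n, by rw [mul_pow, hn, zero_mul]⟩
    obtain ⟨y, hy, hyeq⟩ := stmt_9_aux hc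
    obtain ⟨v, hv⟩ := hy.isUnit_one_add
    refine ⟨K * v, ?_⟩
    have hKv : ((K * v : Hˣ) : H) = (K : H) * (1 + y) := by rw [Units.val_mul, hv]
    have hKvinv : ((↑(K * v)⁻¹ : H)) = (↑K⁻¹ : H) * (↑v⁻¹ : H) := by
      rw [mul_inv, Units.val_mul, mul_comm]
    -- multiply the goal by the unit `K * v`
    have hu := (K * v).isUnit
    rw [hKv, hKvinv]
    have hvinv : (v : H) * (↑v⁻¹ : H) = 1 := v.mul_inv
    have hKinv : (K : H) * (↑K⁻¹ : H) = 1 := K.mul_inv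
    -- key algebraic identity: K²(y + y²) = e
    have hkey : (K : H) ^ 2 * (y + y ^ 2) = e := by
      have h2 : (K : H) ^ 2 * (e * (↑K⁻¹ : H) ^ 2) = e := by
        calc (K : H) ^ 2 * (e * (↑K⁻¹ : H) ^ 2)
            = e * ((K : H) * (↑K⁻¹ : H)) ^ 2 := by ring
          _ = e := by rw [hKinv, one_pow, mul_one]
      rw [hyeq, h2]
    -- it suffices to show the identity after multiplying by (1+y)
    have hv1y : (v : H) = 1 + y := hv
    have hmul : ((K : H) * (1 + y) - e * ((↑K⁻¹ : H) * (↑v⁻¹ : H))) * ((K:H) * (1 + y))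
        = (K : H) * ((K:H) * (1 + y)) := by
      have : e * ((↑K⁻¹ : H) * (↑v⁻¹ : H)) * ((K:H) * (1 + y)) = e := by
        rw [← hv1y]
        calc e * ((↑K⁻¹ : H) * (↑v⁻¹ : H)) * ((K:H) * (v:H))
            = e * ((K:H) * (↑K⁻¹ : H)) * ((v:H) * (↑v⁻¹ : H)) := by ring
          _ = e := by rw [hKinv, hvinv, mul_one, mul_one]
      calc ((K : H) * (1 + y) - e * ((↑K⁻¹ : H) * (↑v⁻¹ : H))) * ((K:H) * (1 + y))
          = (K:H)^2 * (1 + y)^2 - e * ((↑K⁻¹ : H) * (↑v⁻¹ : H)) * ((K:H) * (1 + y)) := by ring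
        _ = (K:H)^2 * (1 + y)^2 - e := by rw [this]
        _ = (K:H)^2 * (1 + y)^2 - (K : H) ^ 2 * (y + y ^ 2) := by rw [hkey]
        _ = (K : H) * ((K:H) * (1 + y)) := by ring
    have hunit : IsUnit ((K:H) * (1 + y)) := by rw [← hKv]; exact hu
    exact hunit.mul_right_cancel (by rw [hmul])
end

section
/- Let H be a weak Frobenius algebra with Δ = Δ(1_H) ∈ H⊗H satisfying Δ·(h⊗1) = Δ·(1⊗h) for all h ∈ H (the bimodule property), and let σ swap the two tensor factors. Write Δ_{ij} for the image of Δ in the (i,j) factors of H^{⊗n}. Define ∇_{ij} = (1 − x_i x_j^{-1})^{-1} Δ_{ij} (1 − r_{ij}) acting on H^{⊗n}[x_1^{±1},…,x_n^{±1}], where r_{ij} swaps variables i and j. Then for all h, h' ∈ H and a, b ∈ ℤ: ∇_{ij}((h x^a)_i (h' x^b)_j) = (hh')_i Δ_{ij} (x_i^a x_j^b − x_i^b x_j^a)/(1 − x_i x_j^{-1}), and this lies in H^{⊗n}[x_1^{±1},…,x_n^{±1}] (no denominators remain). -/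
/-!
Because `Δ` absorbs `h ⊗ 1 - 1 ⊗ h`, both `Δ (h ⊗ h')` and `Δ (h' ⊗ h)` equal `Δ (hh' ⊗ 1)`, so
`Δ (f - r f) = Δ (hh' ⊗ 1) (x^(a,b) - x^(b,a))`. With `u = x_i x_j⁻¹` and `a = b + n`, `n ≥ 0`,
`x^(a,b) - x^(b,a) = -(1 - uⁿ) x^(b,a)`, and `1 - u` divides `1 - uⁿ` by the geometric series.
-/

open TensorProduct AddMonoidAlgebra

theorem mul_tmul_eq_mul_mul_tmul_one {R A : Type*} [CommSemiring R] [CommSemiring A] [Algebra R A]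
    {Δ : A ⊗[R] A} (hΔ : ∀ h : A, Δ * (h ⊗ₜ 1) = Δ * (1 ⊗ₜ h)) (x y : A) :
    Δ * (x ⊗ₜ y) = Δ * ((x * y) ⊗ₜ 1) := by
  calc Δ * (x ⊗ₜ y) = Δ * (1 ⊗ₜ y) * (x ⊗ₜ 1) := by
        rw [mul_assoc, Algebra.TensorProduct.tmul_mul_tmul, one_mul, mul_one]
    _ = Δ * ((x * y) ⊗ₜ 1) := by
        rw [← hΔ, mul_assoc, Algebra.TensorProduct.tmul_mul_tmul, mul_one, mul_comm y]

theorem one_sub_single_dvd_single_sub_single_swap {R : Type*} [Ring R] (a b : ℤ) :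
    (1 - single ((1 : ℤ), (-1 : ℤ)) (1 : R)) ∣ single (a, b) 1 - single (b, a) 1 := by
  wlog hba : b ≤ a generalizing a b
  · rw [← neg_sub (single (b, a) 1)]
    exact (this b a (by omega)).neg_right
  obtain ⟨n, rfl⟩ := Int.exists_add_of_le hba
  have hshift : single (b + n, b) (1 : R) = single ((1 : ℤ), (-1 : ℤ)) 1 ^ n * single (b, b + n) 1 := by
    rw [single_pow, single_mul_single, one_pow, one_mul]
    congr 1
    ext <;> simp only [nsmul_eq_mul, Prod.smul_mk, Prod.fst_add, Prod.snd_add] <;> ring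
  rw [hshift, ← neg_sub (single (b, b + n) 1), ← one_sub_mul]
  exact ((one_sub_dvd_one_sub_pow _ n).mul_right _).neg_right

theorem stmt_16_general (H : Type*) [CommRing H] [Algebra ℂ H]
    (Δel : H ⊗[ℂ] H)
    -- bimodule property `Δ(h_i − h_j) = 0` and symmetry `σ(Δ) = Δ`
    (hbim : ∀ h : H, Δel * (h ⊗ₜ[ℂ] 1) = Δel * ((1 : H) ⊗ₜ[ℂ] h))
    -- the Laurent model and the swap `r_{ij}`
    (r : AddMonoidAlgebra (H ⊗[ℂ] H) (ℤ × ℤ) ≃+* AddMonoidAlgebra (H ⊗[ℂ] H) (ℤ × ℤ))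
    (hr : ∀ (g : ℤ × ℤ) (c : H ⊗[ℂ] H),
      r (AddMonoidAlgebra.single g c) =
        AddMonoidAlgebra.single (g.2, g.1) (Algebra.TensorProduct.comm ℂ H H c)) :
    ∀ (h h' : H) (a b : ℤ),
      letI const : (H ⊗[ℂ] H) →+* AddMonoidAlgebra (H ⊗[ℂ] H) (ℤ × ℤ) :=
        AddMonoidAlgebra.singleZeroRingHom
      letI Xm : ℤ × ℤ → AddMonoidAlgebra (H ⊗[ℂ] H) (ℤ × ℤ) :=
        fun g => AddMonoidAlgebra.single g 1
      letI f := const (h ⊗ₜ[ℂ] h') * Xm (a, b)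
      ∃ q : AddMonoidAlgebra (H ⊗[ℂ] H) (ℤ × ℤ),
        -- `q = ∇_{ij}(f)`, i.e. `(1 − x_i x_j^{-1})·q = Δ·(f − r f)` ...
        (1 - Xm (1, -1)) * q = const Δel * (f - r f) ∧
        -- ... and `q` is given by the stated formula
        (1 - Xm (1, -1)) * q =
          const (Δel * ((h * h') ⊗ₜ[ℂ] (1 : H))) * (Xm (a, b) - Xm (b, a)) := by
  intro h h' a b
  obtain ⟨c, hc⟩ := one_sub_single_dvd_single_sub_single_swap (R := H ⊗[ℂ] H) a b
  have hq : (1 - single ((1 : ℤ), (-1 : ℤ)) 1) * (singleZeroRingHom (Δel * ((h * h') ⊗ₜ 1)) * c) =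
      singleZeroRingHom (Δel * ((h * h') ⊗ₜ 1)) * (single (a, b) 1 - single (b, a) 1) := by
    rw [mul_left_comm, ← hc]
  refine ⟨_, ?_, hq⟩
  have hconst : ∀ x : H ⊗[ℂ] H, (singleZeroRingHom x : (H ⊗[ℂ] H)[ℤ × ℤ]) = single 0 x :=
    fun _ => rfl
  have hsingle : ∀ (g : ℤ × ℤ) (x : H ⊗[ℂ] H), single 0 x * single g 1 = single g x := by
    intro g x
    rw [single_mul_single, zero_add, mul_one]
  dsimp only
  rw [hq]
  simp only [hconst, hsingle, hr, Algebra.TensorProduct.comm_tmul, mul_sub, single_mul_single, zero_add]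
  rw [mul_tmul_eq_mul_mul_tmul_one hbim h h', mul_tmul_eq_mul_mul_tmul_one hbim h' h, mul_comm h']

/-- Let `H` be a weak Frobenius algebra with
`Δ = Δ(1_H) ∈ H⊗H` satisfying the bimodule property `Δ·(h⊗1) = Δ·(1⊗h)` and
symmetry `σ(Δ) = Δ` (`σ` the factor swap).  On the Laurent polynomial ring
`(H⊗H)[x_i^{±1}, x_j^{±1}]` (only the `i`-th and `j`-th tensor factors and
variables are relevant; the ring is modelled as
`AddMonoidAlgebra (H ⊗[ℂ] H) (ℤ × ℤ)`), with `r = r_{ij}` the involution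
swapping both the two variables and the two tensor factors, the operator
`∇_{ij} = (1 − x_i x_j^{-1})^{-1} Δ_{ij} (1 − r_{ij})` satisfies, for all
`h, h' ∈ H` and `a, b ∈ ℤ`:
`∇_{ij}((h x^a)_i (h' x^b)_j) = (hh')_i Δ_{ij} (x_i^a x_j^b − x_i^b x_j^a)/(1 − x_i x_j^{-1})`,
and this lies in the Laurent polynomial ring (no denominators remain): i.e.
there is `q` in the Laurent ring with
`(1 − x_i x_j^{-1})·q = Δ·((h⊗h') x_i^a x_j^b − σ(h⊗h') x_i^b x_j^a)
                      = Δ·(hh'⊗1)·(x_i^a x_j^b − x_i^b x_j^a)`. -/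
theorem stmt_16 (H : Type*) [CommRing H] [Algebra ℂ H]
    (Δel : H ⊗[ℂ] H)
    -- bimodule property `Δ(h_i − h_j) = 0` and symmetry `σ(Δ) = Δ`
    (hbim : ∀ h : H, Δel * (h ⊗ₜ[ℂ] 1) = Δel * ((1 : H) ⊗ₜ[ℂ] h))
    (hsym : Algebra.TensorProduct.comm ℂ H H Δel = Δel)
    -- the Laurent model and the swap `r_{ij}`
    (r : AddMonoidAlgebra (H ⊗[ℂ] H) (ℤ × ℤ) ≃+* AddMonoidAlgebra (H ⊗[ℂ] H) (ℤ × ℤ))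
    (hr : ∀ (g : ℤ × ℤ) (c : H ⊗[ℂ] H),
      r (AddMonoidAlgebra.single g c) =
        AddMonoidAlgebra.single (g.2, g.1) (Algebra.TensorProduct.comm ℂ H H c)) :
    ∀ (h h' : H) (a b : ℤ),
      letI const : (H ⊗[ℂ] H) →+* AddMonoidAlgebra (H ⊗[ℂ] H) (ℤ × ℤ) :=
        AddMonoidAlgebra.singleZeroRingHom
      letI Xm : ℤ × ℤ → AddMonoidAlgebra (H ⊗[ℂ] H) (ℤ × ℤ) :=
        fun g => AddMonoidAlgebra.single g 1
      letI f := const (h ⊗ₜ[ℂ] h') * Xm (a, b)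
      ∃ q : AddMonoidAlgebra (H ⊗[ℂ] H) (ℤ × ℤ),
        -- `q = ∇_{ij}(f)`, i.e. `(1 − x_i x_j^{-1})·q = Δ·(f − r f)` ...
        (1 - Xm (1, -1)) * q = const Δel * (f - r f) ∧
        -- ... and `q` is given by the stated formula
        (1 - Xm (1, -1)) * q =
          const (Δel * ((h * h') ⊗ₜ[ℂ] (1 : H))) * (Xm (a, b) - Xm (b, a)) :=
  stmt_16_general H Δel hbim r hr
end
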